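/- arXiv:1803.01507 — 8 statements merged into one kernel-verified Lean document; each statement's English description precedes it below -/
import Mathlib

section
/- On Ω_β the vector field (F₁, F₂) is Hamiltonian with Hamiltonian H: for all (θ,W) ∈ Ω_β, F₁(θ,W) = ∂H/∂W(θ,W) and F₂(θ,W) = −∂H/∂θ(θ,W). -/
noncomputable section

open Real Set

/-- θ_β = arctan(1/√β). -/
def thetaB (β : ℝ) : ℝ := Real.arctan (1 / Real.sqrt β)

/-- The phase space Ω_β. -/
def OmegaB (β : ℝ) : Set (ℝ × ℝ) :=
  {p | 0 < p.1 ∧ p.1 < Real.pi / 2 ∧ p ≠ (thetaB β, 0)}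

/-- D(θ,W) = (d²/β)(√β sin θ − cos θ)² + W². -/
def Dfun (d β θ W : ℝ) : ℝ :=
  d ^ 2 / β * (Real.sqrt β * Real.sin θ - Real.cos θ) ^ 2 + W ^ 2

/-- F₁(θ,W) = α √β W / D(θ,W)^{3/2}. -/
def F1 (α d β θ W : ℝ) : ℝ :=
  α * Real.sqrt β * W / Dfun d β θ W ^ ((3 : ℝ) / 2)

/-- F₂(θ,W). -/
def F2 (α d β θ W : ℝ) : ℝ :=
  (β ^ ((3 : ℝ) / 2) * Real.sin θ - Real.cos θ) / (d * Real.sin θ * Real.cos θ) -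
    α * d ^ 2 * (Real.sin θ + Real.sqrt β * Real.cos θ) *
        (Real.sqrt β * Real.sin θ - Real.cos θ) /
      (Real.sqrt β * Dfun d β θ W ^ ((3 : ℝ) / 2))

/-- The Hamiltonian H(θ,W). -/
def Ham (α d β θ W : ℝ) : ℝ :=
  1 / (2 * d) *
      Real.log (((1 - Real.sin θ) ^ (β ^ ((3 : ℝ) / 2)) * (1 - Real.cos θ)) /
        ((1 + Real.sin θ) ^ (β ^ ((3 : ℝ) / 2)) * (1 + Real.cos θ))) -
    α * Real.sqrt β / Dfun d β θ W ^ ((1 : ℝ) / 2)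

/-! Both identities are a direct differentiation. On `Ω_β` the quantity `D` is positive, since it
vanishes only where `W = 0` and `√β sin θ = cos θ`, i.e. at `(θ_β, 0)`; so the `D ^ (1/2)` term is
differentiable. Near a point of `(0, π/2)` the logarithm in `H` splits as
`β^{3/2} (log (1 - sin) - log (1 + sin)) + (log (1 - cos) - log (1 + cos))`, whose derivative is
`-2 β^{3/2} / cos θ + 2 / sin θ` because `(1 - sin)(1 + sin) = cos²` and `(1 - cos)(1 + cos) = sin²`. -/

lemma one_sub_sin_mul_one_add_sin (x : ℝ) : (1 - sin x) * (1 + sin x) = cos x ^ 2 := by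
  linear_combination -sin_sq_add_cos_sq x

lemma one_sub_cos_mul_one_add_cos (x : ℝ) : (1 - cos x) * (1 + cos x) = sin x ^ 2 := by
  linear_combination -sin_sq_add_cos_sq x

lemma one_sub_sin_pos_of_cos_ne_zero {x : ℝ} (hx : cos x ≠ 0) : 0 < 1 - sin x :=
  (sub_nonneg.2 (sin_le_one x)).lt_of_ne fun h =>
    hx (pow_eq_zero_iff two_ne_zero |>.1 (by rw [← one_sub_sin_mul_one_add_sin, ← h, zero_mul]))

lemma one_add_sin_pos_of_cos_ne_zero {x : ℝ} (hx : cos x ≠ 0) : 0 < 1 + sin x :=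
  (neg_le_iff_add_nonneg'.1 (neg_one_le_sin x)).lt_of_ne fun h =>
    hx (pow_eq_zero_iff two_ne_zero |>.1 (by rw [← one_sub_sin_mul_one_add_sin, ← h, mul_zero]))

lemma one_sub_cos_pos_of_sin_ne_zero {x : ℝ} (hx : sin x ≠ 0) : 0 < 1 - cos x :=
  (sub_nonneg.2 (cos_le_one x)).lt_of_ne fun h =>
    hx (pow_eq_zero_iff two_ne_zero |>.1 (by rw [← one_sub_cos_mul_one_add_cos, ← h, zero_mul]))

lemma one_add_cos_pos_of_sin_ne_zero {x : ℝ} (hx : sin x ≠ 0) : 0 < 1 + cos x :=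
  (neg_le_iff_add_nonneg'.1 (neg_one_le_cos x)).lt_of_ne fun h =>
    hx (pow_eq_zero_iff two_ne_zero |>.1 (by rw [← one_sub_cos_mul_one_add_cos, ← h, mul_zero]))

lemma hasDerivAt_log_one_sub_sin_sub_log_one_add_sin {x : ℝ} (hx : cos x ≠ 0) :
    HasDerivAt (fun s => log (1 - sin s) - log (1 + sin s)) (-2 / cos x) x := by
  have h₁ := ((hasDerivAt_sin x).const_sub 1).log (one_sub_sin_pos_of_cos_ne_zero hx).ne'
  have h₂ := ((hasDerivAt_sin x).const_add 1).log (one_add_sin_pos_of_cos_ne_zero hx).ne'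
  refine (h₁.sub h₂).congr_deriv ?_
  rw [div_sub_div _ _ (one_sub_sin_pos_of_cos_ne_zero hx).ne' (one_add_sin_pos_of_cos_ne_zero hx).ne',
    one_sub_sin_mul_one_add_sin, div_eq_div_iff (pow_ne_zero 2 hx) hx]
  ring

lemma hasDerivAt_log_one_sub_cos_sub_log_one_add_cos {x : ℝ} (hx : sin x ≠ 0) :
    HasDerivAt (fun s => log (1 - cos s) - log (1 + cos s)) (2 / sin x) x := by
  have h₁ := ((hasDerivAt_cos x).const_sub 1).log (one_sub_cos_pos_of_sin_ne_zero hx).ne'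
  have h₂ := ((hasDerivAt_cos x).const_add 1).log (one_add_cos_pos_of_sin_ne_zero hx).ne'
  refine (h₁.sub h₂).congr_deriv ?_
  rw [div_sub_div _ _ (one_sub_cos_pos_of_sin_ne_zero hx).ne' (one_add_cos_pos_of_sin_ne_zero hx).ne',
    one_sub_cos_mul_one_add_cos, div_eq_div_iff (pow_ne_zero 2 hx) hx]
  ring

lemma log_trig_ratio_eq {p x : ℝ} (hs : sin x ≠ 0) (hc : cos x ≠ 0) :
    log (((1 - sin x) ^ p * (1 - cos x)) / ((1 + sin x) ^ p * (1 + cos x))) =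
      p * (log (1 - sin x) - log (1 + sin x)) + (log (1 - cos x) - log (1 + cos x)) := by
  have h₁ := one_sub_sin_pos_of_cos_ne_zero hc
  have h₂ := one_add_sin_pos_of_cos_ne_zero hc
  have h₃ := one_sub_cos_pos_of_sin_ne_zero hs
  have h₄ := one_add_cos_pos_of_sin_ne_zero hs
  rw [log_div (by positivity) (by positivity), log_mul (by positivity) h₃.ne',
    log_mul (by positivity) h₄.ne', log_rpow h₁, log_rpow h₂]
  ring

lemma hasDerivAt_log_trig_ratio (p : ℝ) {x : ℝ} (hs : sin x ≠ 0) (hc : cos x ≠ 0) :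
    HasDerivAt (fun s => log (((1 - sin s) ^ p * (1 - cos s)) / ((1 + sin s) ^ p * (1 + cos s))))
      (p * (-2 / cos x) + 2 / sin x) x := by
  have h := ((hasDerivAt_log_one_sub_sin_sub_log_one_add_sin hc).const_mul p).add
    (hasDerivAt_log_one_sub_cos_sub_log_one_add_cos hs)
  refine h.congr_of_eventuallyEq ?_
  filter_upwards [continuous_sin.continuousAt.eventually_ne hs,
    continuous_cos.continuousAt.eventually_ne hc] with s hs hc
  exact log_trig_ratio_eq hs hc

lemma HasDerivAt.const_div_rpow_half {f : ℝ → ℝ} {f' x : ℝ} (c : ℝ) (hf : HasDerivAt f f' x)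
    (hx : 0 < f x) :
    HasDerivAt (fun y => c / f y ^ (1 / 2 : ℝ)) (-(c * f') / (2 * f x ^ (3 / 2 : ℝ))) x := by
  have h := (hasDerivAt_const x c).div (hf.rpow_const (p := 1 / 2) (Or.inl hx.ne'))
    (rpow_pos_of_pos hx _).ne'
  refine h.congr_deriv ?_
  have hr := rpow_pos_of_pos hx (1 / 2)
  rw [show (3 / 2 : ℝ) = 1 / 2 + 1 by norm_num, show (1 / 2 - 1 : ℝ) = -(1 / 2) by norm_num,
    rpow_add hx, rpow_neg hx.le, rpow_one]
  field_simp
  rw [sq, ← rpow_add hx]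
  norm_num
  ring

lemma eq_thetaB_of_sqrt_mul_sin_eq_cos {β θ : ℝ} (hβ : 0 < β) (hθ : θ ∈ Ioo (-(π / 2)) (π / 2))
    (h : sqrt β * sin θ = cos θ) : θ = thetaB β := by
  have hs : sin θ ≠ 0 := fun hs => (cos_pos_of_mem_Ioo hθ).ne' (by rw [← h, hs, mul_zero])
  rw [thetaB, ← arctan_tan hθ.1 hθ.2, tan_eq_sin_div_cos, ← h]
  field_simp [hs, (sqrt_pos.2 hβ).ne']

lemma Dfun_pos_of_mem_OmegaB {d β θ W : ℝ} (hd : d ≠ 0) (hβ : 0 < β)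
    (hmem : (θ, W) ∈ OmegaB β) : 0 < Dfun d β θ W := by
  obtain ⟨hθ₀, hθ₁, hne⟩ := hmem
  rcases eq_or_ne W 0 with rfl | hW
  · have h : sqrt β * sin θ - cos θ ≠ 0 := fun h => hne <| by
      rw [← eq_thetaB_of_sqrt_mul_sin_eq_cos hβ ⟨by linarith [pi_pos], hθ₁⟩ (sub_eq_zero.1 h)]
    have := sq_pos_iff.2 h
    unfold Dfun
    positivity
  · unfold Dfun
    positivity

lemma hasDerivAt_Dfun_W (d β θ W : ℝ) : HasDerivAt (fun w => Dfun d β θ w) (2 * W) W := by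
  simpa [Dfun] using (hasDerivAt_pow 2 W).const_add (d ^ 2 / β * (sqrt β * sin θ - cos θ) ^ 2)

lemma hasDerivAt_Dfun_theta (d β θ W : ℝ) :
    HasDerivAt (fun s => Dfun d β s W)
      (d ^ 2 / β * (2 * (sqrt β * sin θ - cos θ) * (sin θ + sqrt β * cos θ))) θ := by
  have h := ((((hasDerivAt_sin θ).const_mul (sqrt β)).sub (hasDerivAt_cos θ)).pow 2).const_mul
    (d ^ 2 / β) |>.add_const (W ^ 2)
  simp only [Pi.sub_apply, Pi.pow_apply] at h
  refine h.congr_deriv ?_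
  push_cast
  ring

lemma hasDerivAt_Ham_W (α d β θ W : ℝ) (hD : 0 < Dfun d β θ W) :
    HasDerivAt (fun w => Ham α d β θ w) (F1 α d β θ W) W := by
  refine ((hasDerivAt_Dfun_W d β θ W).const_div_rpow_half (α * sqrt β) hD).const_sub _
    |>.congr_deriv ?_
  rw [F1]
  ring

lemma hasDerivAt_Ham_theta (α d β θ W : ℝ) (hd : d ≠ 0) (hβ : 0 < β) (hs : sin θ ≠ 0)
    (hc : cos θ ≠ 0) (hD : 0 < Dfun d β θ W) :
    HasDerivAt (fun s => Ham α d β s W) (-F2 α d β θ W) θ := by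
  refine (((hasDerivAt_log_trig_ratio _ hs hc).const_mul (1 / (2 * d))).sub
    ((hasDerivAt_Dfun_theta d β θ W).const_div_rpow_half (α * sqrt β) hD)).congr_deriv ?_
  have hD' := rpow_pos_of_pos hD (3 / 2)
  have hsqrt := sqrt_pos.2 hβ
  have hsq := sq_sqrt hβ.le
  rw [F2]
  generalize Dfun d β θ W ^ (3 / 2 : ℝ) = D at *
  generalize β ^ (3 / 2 : ℝ) = b
  -- replace `β` by `s ^ 2` with `s = √β`, so that the identity becomes rational in `s`
  generalize sqrt β = s at *
  subst hsq
  field_simp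
  ring

theorem hamiltonian_structure_same_sign_general
    (α d β : ℝ) (hd : 0 < d) (hβ : 1 ≤ β)
    (θ W : ℝ) (hmem : (θ, W) ∈ OmegaB β) :
    HasDerivAt (fun w => Ham α d β θ w) (F1 α d β θ W) W ∧
    HasDerivAt (fun s => Ham α d β s W) (-F2 α d β θ W) θ := by
  have hβ₀ : 0 < β := by linarith
  have hD := Dfun_pos_of_mem_OmegaB hd.ne' hβ₀ hmem
  obtain ⟨hθ₀, hθ₁, -⟩ := hmem
  have hs : sin θ ≠ 0 := (sin_pos_of_pos_of_lt_pi hθ₀ (by linarith [pi_pos])).ne'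
  have hc : cos θ ≠ 0 := (cos_pos_of_mem_Ioo ⟨by linarith [pi_pos], hθ₁⟩).ne'
  exact ⟨hasDerivAt_Ham_W α d β θ W hD, hasDerivAt_Ham_theta α d β θ W hd.ne' hβ₀ hs hc hD⟩

/-- The vector field (F₁, F₂) is Hamiltonian on Ω_β with Hamiltonian H:
F₁ = ∂H/∂W and F₂ = −∂H/∂θ. -/
theorem hamiltonian_structure_same_sign
    (α d β : ℝ) (hα : 0 < α) (hd : 0 < d) (hβ : 1 ≤ β)
    (θ W : ℝ) (hmem : (θ, W) ∈ OmegaB β) :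
    HasDerivAt (fun w => Ham α d β θ w) (F1 α d β θ W) W ∧
    HasDerivAt (fun s => Ham α d β s W) (-F2 α d β θ W) θ :=
  hamiltonian_structure_same_sign_general α d β hd hβ θ W hmem
end
end

section
/- If (θ, W) : I → Ω_β is a differentiable solution on an interval I of the system dθ/dt = F₁(θ,W), dW/dt = F₂(θ,W), then the function t ↦ H(θ(t), W(t)) is constant on I. -/
noncomputable section

open Real Set

lemma Dfun_pos (d β x w : ℝ) (hd : 0 < d) (hβ : 1 ≤ β) (hx0 : 0 < x) (hx2 : x < Real.pi / 2)
    (hne : ((x, w) : ℝ × ℝ) ≠ (thetaB β, 0)) : 0 < Dfun d β x w := by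
  have hβ0 : (0:ℝ) < β := by linarith
  have hb0 : (0:ℝ) < Real.sqrt β := Real.sqrt_pos.mpr hβ0
  have hcx : 0 < Real.cos x := Real.cos_pos_of_mem_Ioo ⟨by linarith [Real.pi_pos], hx2⟩
  have h1 : (0:ℝ) ≤ d ^ 2 / β * (Real.sqrt β * Real.sin x - Real.cos x) ^ 2 := by positivity
  have h2 : (0:ℝ) ≤ w ^ 2 := sq_nonneg w
  rcases lt_or_eq_of_le (add_nonneg h1 h2) with h | h
  · exact h
  · exfalso
    have hc : d ^ 2 / β > 0 := by positivity
    have hz1 : (Real.sqrt β * Real.sin x - Real.cos x) = 0 := by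
      have hq : (Real.sqrt β * Real.sin x - Real.cos x) ^ 2 = 0 := by nlinarith
      exact (pow_eq_zero_iff two_ne_zero).mp hq
    have hz2 : w = 0 := by
      have hq : w ^ 2 = 0 := by nlinarith
      exact (pow_eq_zero_iff two_ne_zero).mp hq
    apply hne
    have htan : Real.tan x = 1 / Real.sqrt β := by
      rw [Real.tan_eq_sin_div_cos]
      have hsin : Real.sin x = Real.cos x / Real.sqrt β := by
        field_simp at hz1 ⊢; linarith
      rw [hsin]
      field_simp
    have : x = thetaB β := by
      rw [thetaB, ← htan, Real.arctan_tan (by linarith [Real.pi_pos]) hx2]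
    rw [this, hz2]

set_option maxHeartbeats 1000000 in
/-- Conservation of the Hamiltonian: along any differentiable solution of the
system on an interval I, the Hamiltonian is constant. -/
theorem hamiltonian_conserved_same_sign
    (α d β : ℝ) (hα : 0 < α) (hd : 0 < d) (hβ : 1 ≤ β)
    (I : Set ℝ) (hI : I.OrdConnected)
    (θ W : ℝ → ℝ)
    (hmem : ∀ t ∈ I, (θ t, W t) ∈ OmegaB β)
    (hθ : ∀ t ∈ I, HasDerivWithinAt θ (F1 α d β (θ t) (W t)) I t)
    (hW : ∀ t ∈ I, HasDerivWithinAt W (F2 α d β (θ t) (W t)) I t) :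
    ∀ s ∈ I, ∀ t ∈ I, Ham α d β (θ s) (W s) = Ham α d β (θ t) (W t) := by
  have hβ0 : (0:ℝ) < β := by linarith
  have hb0 : (0:ℝ) < Real.sqrt β := Real.sqrt_pos.mpr hβ0
  have hb2 : Real.sqrt β ^ 2 = β := Real.sq_sqrt hβ0.le
  have key : ∀ t ∈ I, HasDerivWithinAt (fun u => Ham α d β (θ u) (W u)) 0 I t := by
    intro t ht
    obtain ⟨hx0, hx2, hne⟩ := hmem t ht
    simp only at hx0 hx2
    have hθt := hθ t ht
    have hWt := hW t ht
    have hpi := Real.pi_pos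
    have hsx : 0 < Real.sin (θ t) := Real.sin_pos_of_pos_of_lt_pi hx0 (by linarith)
    have hcx : 0 < Real.cos (θ t) := Real.cos_pos_of_mem_Ioo ⟨by linarith, hx2⟩
    have hs1 : Real.sin (θ t) < 1 := by
      have h := Real.strictMonoOn_sin ⟨by linarith, hx2.le⟩
        (⟨by linarith, le_refl _⟩ : Real.pi/2 ∈ Set.Icc (-(Real.pi/2)) (Real.pi/2)) hx2
      simpa using h
    have hc1 : Real.cos (θ t) < 1 := by
      have h := Real.strictAntiOn_cos (⟨le_refl _, hpi.le⟩ : (0:ℝ) ∈ Set.Icc 0 Real.pi)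
        ⟨hx0.le, by linarith⟩ hx0
      simpa using h
    have hD : 0 < Dfun d β (θ t) (W t) := Dfun_pos d β _ _ hd hβ hx0 hx2 hne
    have hsin : HasDerivWithinAt (fun u => Real.sin (θ u))
        (Real.cos (θ t) * F1 α d β (θ t) (W t)) I t :=
      (Real.hasDerivAt_sin (θ t)).comp_hasDerivWithinAt t hθt
    have hcos : HasDerivWithinAt (fun u => Real.cos (θ u))
        (-Real.sin (θ t) * F1 α d β (θ t) (W t)) I t :=
      (Real.hasDerivAt_cos (θ t)).comp_hasDerivWithinAt t hθt
    have l1 : HasDerivWithinAt (fun u => Real.log (1 - Real.sin (θ u)))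
        ((0 - Real.cos (θ t) * F1 α d β (θ t) (W t)) / (1 - Real.sin (θ t))) I t :=
      ((hasDerivWithinAt_const t I (1:ℝ)).sub hsin).log (by simp; linarith)
    have l2 : HasDerivWithinAt (fun u => Real.log (1 + Real.sin (θ u)))
        ((0 + Real.cos (θ t) * F1 α d β (θ t) (W t)) / (1 + Real.sin (θ t))) I t :=
      ((hasDerivWithinAt_const t I (1:ℝ)).add hsin).log (by show (1:ℝ) + Real.sin (θ t) ≠ 0; exact (by linarith : (0:ℝ) < 1 + Real.sin (θ t)).ne')
    have l3 : HasDerivWithinAt (fun u => Real.log (1 - Real.cos (θ u)))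
        ((0 - -Real.sin (θ t) * F1 α d β (θ t) (W t)) / (1 - Real.cos (θ t))) I t :=
      ((hasDerivWithinAt_const t I (1:ℝ)).sub hcos).log (by simp; linarith)
    have l4 : HasDerivWithinAt (fun u => Real.log (1 + Real.cos (θ u)))
        ((0 + -Real.sin (θ t) * F1 α d β (θ t) (W t)) / (1 + Real.cos (θ t))) I t :=
      ((hasDerivWithinAt_const t I (1:ℝ)).add hcos).log (by show (1:ℝ) + Real.cos (θ t) ≠ 0; exact (by linarith : (0:ℝ) < 1 + Real.cos (θ t)).ne')
    have hDD : HasDerivWithinAt (fun u => Dfun d β (θ u) (W u))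
        (d ^ 2 / β * ((2:ℕ) * (Real.sqrt β * Real.sin (θ t) - Real.cos (θ t)) ^ (2 - 1) *
          (Real.sqrt β * (Real.cos (θ t) * F1 α d β (θ t) (W t)) -
            -Real.sin (θ t) * F1 α d β (θ t) (W t))) +
         (2:ℕ) * W t ^ (2 - 1) * F2 α d β (θ t) (W t)) I t := by
      simp only [Dfun]
      exact ((((hsin.const_mul (Real.sqrt β)).sub hcos).pow 2).const_mul (d^2/β)).add (hWt.pow 2)
    have hP := hDD.rpow_const (p := (1:ℝ)/2) (Or.inl hD.ne')
    have hPpos : 0 < Dfun d β (θ t) (W t) ^ ((1:ℝ)/2) := Real.rpow_pos_of_pos hD _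
    have hdiv := (hasDerivWithinAt_const t I (α * Real.sqrt β)).div hP hPpos.ne'
    have total := ((((l1.sub l2).const_mul (β ^ ((3:ℝ)/2))).add (l3.sub l4)).const_mul
      (1/(2*d))).sub hdiv
    have hameq : ∀ u ∈ I, Ham α d β (θ u) (W u) =
        1/(2*d) * (β ^ ((3:ℝ)/2) * (Real.log (1 - Real.sin (θ u)) - Real.log (1 + Real.sin (θ u))) +
          (Real.log (1 - Real.cos (θ u)) - Real.log (1 + Real.cos (θ u)))) -
        α * Real.sqrt β / Dfun d β (θ u) (W u) ^ ((1:ℝ)/2) := by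
      intro u hu
      obtain ⟨hu0, hu2, _⟩ := hmem u hu
      simp only at hu0 hu2
      have hsu : 0 < Real.sin (θ u) := Real.sin_pos_of_pos_of_lt_pi hu0 (by linarith)
      have hcu : 0 < Real.cos (θ u) := Real.cos_pos_of_mem_Ioo ⟨by linarith, hu2⟩
      have hs1u : Real.sin (θ u) < 1 := by
        have h := Real.strictMonoOn_sin ⟨by linarith, hu2.le⟩
          (⟨by linarith, le_refl _⟩ : Real.pi/2 ∈ Set.Icc (-(Real.pi/2)) (Real.pi/2)) hu2
        simpa using h
      have hc1u : Real.cos (θ u) < 1 := by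
        have h := Real.strictAntiOn_cos (⟨le_refl _, hpi.le⟩ : (0:ℝ) ∈ Set.Icc 0 Real.pi)
          ⟨hu0.le, by linarith⟩ hu0
        simpa using h
      have p1 : (0:ℝ) < 1 - Real.sin (θ u) := by linarith
      have p2 : (0:ℝ) < 1 + Real.sin (θ u) := by linarith
      have p3 : (0:ℝ) < 1 - Real.cos (θ u) := by linarith
      have p4 : (0:ℝ) < 1 + Real.cos (θ u) := by linarith
      rw [Ham, Real.log_div (mul_pos (Real.rpow_pos_of_pos p1 _) p3).ne'
          (mul_pos (Real.rpow_pos_of_pos p2 _) p4).ne',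
        Real.log_mul (Real.rpow_pos_of_pos p1 _).ne' p3.ne',
        Real.log_mul (Real.rpow_pos_of_pos p2 _).ne' p4.ne',
        Real.log_rpow p1, Real.log_rpow p2]
      ring
    have htotal0 : HasDerivWithinAt (fun u =>
        1/(2*d) * (β ^ ((3:ℝ)/2) * (Real.log (1 - Real.sin (θ u)) - Real.log (1 + Real.sin (θ u))) +
          (Real.log (1 - Real.cos (θ u)) - Real.log (1 + Real.cos (θ u)))) -
        α * Real.sqrt β / Dfun d β (θ u) (W u) ^ ((1:ℝ)/2)) 0 I t := by
      refine total.congr_deriv (Eq.symm ?_)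
      have hpy : Real.sin (θ t) ^ 2 + Real.cos (θ t) ^ 2 = 1 := Real.sin_sq_add_cos_sq _
      have e3 : Dfun d β (θ t) (W t) ^ ((3:ℝ)/2)
          = Dfun d β (θ t) (W t) * Dfun d β (θ t) (W t) ^ ((1:ℝ)/2) := by
        rw [show (3:ℝ)/2 = 1 + 1/2 by norm_num, Real.rpow_add hD, Real.rpow_one]
      have em : Dfun d β (θ t) (W t) ^ ((1:ℝ)/2 - 1)
          = Dfun d β (θ t) (W t) ^ ((1:ℝ)/2) / Dfun d β (θ t) (W t) := by
        rw [Real.rpow_sub hD, Real.rpow_one]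
      have ePP : Dfun d β (θ t) (W t) ^ ((1:ℝ)/2) * Dfun d β (θ t) (W t) ^ ((1:ℝ)/2)
          = Dfun d β (θ t) (W t) := by
        rw [← Real.rpow_add hD]; norm_num
      have eb3 : β ^ ((3:ℝ)/2) = Real.sqrt β ^ 3 := by
        have h1 : β ^ ((3:ℝ)/2) = (β ^ ((1:ℝ)/2)) ^ (3:ℕ) := by
          rw [← Real.rpow_natCast (β ^ ((1:ℝ)/2)) 3, ← Real.rpow_mul hβ0.le]
          norm_num
        rw [h1, ← Real.sqrt_eq_rpow]
      simp only [F1, F2, em, e3, eb3]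
      set D := Dfun d β (θ t) (W t) with hDdef
      set P := D ^ ((1:ℝ)/2) with hPdef
      set sb := Real.sqrt β with hsbdef
      set s := Real.sin (θ t) with hsdef
      set c := Real.cos (θ t) with hcdef
      set w := W t with hwdef
      have p1 : (0:ℝ) < 1 - Real.sin (θ t) := by linarith
      have p2 : (0:ℝ) < 1 + Real.sin (θ t) := by linarith
      have p3 : (0:ℝ) < 1 - Real.cos (θ t) := by linarith
      have p4 : (0:ℝ) < 1 + Real.cos (θ t) := by linarith
      have q1 : (1 - s)⁻¹ = (1 + s) / c ^ 2 := by
        rw [inv_eq_one_div, div_eq_div_iff (by linarith) (by positivity)]; linear_combination hpy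
      have q2 : (1 + s)⁻¹ = (1 - s) / c ^ 2 := by
        rw [inv_eq_one_div, div_eq_div_iff (by linarith) (by positivity)]; linear_combination hpy
      have q3 : (1 - c)⁻¹ = (1 + c) / s ^ 2 := by
        rw [inv_eq_one_div, div_eq_div_iff (by linarith) (by positivity)]; linear_combination hpy
      have q4 : (1 + c)⁻¹ = (1 - c) / s ^ 2 := by
        rw [inv_eq_one_div, div_eq_div_iff (by linarith) (by positivity)]; linear_combination hpy
      have hs0 : s ≠ 0 := hsx.ne'
      have hc0 : c ≠ 0 := hcx.ne'
      have hd0 : d ≠ 0 := hd.ne'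
      have hP0 : P ≠ 0 := hPpos.ne'
      have hsb0 : sb ≠ 0 := hb0.ne'
      simp only [div_eq_mul_inv]
      rw [q1, q2, q3, q4, ← hb2, ← ePP]
      field_simp
      ring
    exact htotal0.congr (fun u hu => hameq u hu) (hameq t ht)
  intro s hs t ht
  have h0 := Convex.norm_image_sub_le_of_norm_hasDerivWithin_le (C := 0) (f' := fun _ => (0:ℝ)) key
    (fun x hx => by simp) (convex_iff_ordConnected.mpr hI) ht hs
  have h1 : ‖Ham α d β (θ s) (W s) - Ham α d β (θ t) (W t)‖ ≤ 0 := by simpa using h0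
  have h2 := norm_le_zero_iff.mp h1
  linarith [sub_eq_zero.mp h2]
end
end

section
/- Let β ≥ 1 and 0 < α < 1/3, and define h_α(y) = β y³ − (2β + 1) y² + (β + 2) y − 1 + α (y² + β y). Then h_α has exactly one zero y_* in the open interval (0, 1), and h_α'(y_*) > 0. -/
/-!
Since h_α(y) = (y - 1)²(βy - 1) + α y (y + β), the cubic is positive wherever βy ≥ 1, so its
zeros in (0, 1) lie in (0, 1/β). There h_α'(y) = (1 - y)(β + 2 - 3βy) + α(2y + β) > 0, so h_α
increases strictly from h_α(0) = -1 to h_α(1/β) > 0 and crosses zero exactly once, with positive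
slope.
-/

theorem lt_inv_iff_mul_lt_one_of_pos {K : Type*} [Field K] [LinearOrder K] [IsStrictOrderedRing K]
    {a b : K} (ha : 0 < a) : b < a⁻¹ ↔ a * b < 1 := by
  simpa only [not_le] using (inv_le_iff_one_le_mul₀' ha).not

def cubicH (α β : ℝ) (y : ℝ) : ℝ :=
  β * y ^ 3 - (2 * β + 1) * y ^ 2 + (β + 2) * y - 1 + α * (y ^ 2 + β * y)

namespace cubicH

variable {α β y : ℝ}

theorem eq_sq_mul_add (α β y : ℝ) :
    cubicH α β y = (y - 1) ^ 2 * (β * y - 1) + α * (y * (y + β)) := by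
  unfold cubicH; ring

theorem hasDerivAt (α β y : ℝ) :
    HasDerivAt (cubicH α β) ((1 - y) * (β + 2 - 3 * β * y) + α * (2 * y + β)) y := by
  have h := ((((hasDerivAt_pow 3 y).const_mul β).sub
      ((hasDerivAt_pow 2 y).const_mul (2 * β + 1))).add
      ((hasDerivAt_id y).const_mul (β + 2))).sub_const 1 |>.add
      (((hasDerivAt_pow 2 y).add ((hasDerivAt_id y).const_mul β)).const_mul α)
  exact h.congr_deriv (by ring)

theorem continuous (α β : ℝ) : Continuous (cubicH α β) := by
  unfold cubicH; fun_prop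

theorem apply_zero (α β : ℝ) : cubicH α β 0 = -1 := by
  simp [cubicH]

theorem pos_of_one_le_mul (hα : 0 < α) (hβ : 0 < β) (hy : 0 < y) (hβy : 1 ≤ β * y) :
    0 < cubicH α β y := by
  rw [eq_sq_mul_add]
  have : 0 < α * (y * (y + β)) := by positivity
  nlinarith [sq_nonneg (y - 1)]

theorem apply_inv_pos (hα : 0 < α) (hβ : 0 < β) : 0 < cubicH α β β⁻¹ :=
  pos_of_one_le_mul hα hβ (inv_pos.2 hβ) (mul_inv_cancel₀ hβ.ne').ge

theorem deriv_pos (hα : 0 < α) (hβ : 1 ≤ β) (hy : 0 ≤ y) (hβy : β * y < 1) :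
    0 < deriv (cubicH α β) y := by
  rw [(hasDerivAt α β y).deriv]
  have hy1 : 0 < 1 - y := by nlinarith
  have h3 : 0 < β + 2 - 3 * β * y := by linarith
  have : 0 < α * (2 * y + β) := by positivity
  nlinarith [mul_pos hy1 h3]

theorem strictMonoOn_Icc_zero_inv (hα : 0 < α) (hβ : 1 ≤ β) :
    StrictMonoOn (cubicH α β) (Set.Icc 0 β⁻¹) := by
  refine strictMonoOn_of_deriv_pos (convex_Icc _ _) (continuous α β).continuousOn ?_
  rw [interior_Icc]
  rintro y ⟨hy0, hyβ⟩
  exact deriv_pos hα hβ hy0.le ((lt_inv_iff_mul_lt_one_of_pos (by linarith)).1 hyβ)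

end cubicH

theorem cubic_unique_zero_general (α β : ℝ) (hα : 0 < α) (hβ : 1 ≤ β) :
    ∃ ys : ℝ, ys ∈ Set.Ioo (0 : ℝ) 1 ∧
      (β * ys ^ 3 - (2 * β + 1) * ys ^ 2 + (β + 2) * ys - 1
        + α * (ys ^ 2 + β * ys) = 0) ∧
      (∀ y ∈ Set.Ioo (0 : ℝ) 1,
        β * y ^ 3 - (2 * β + 1) * y ^ 2 + (β + 2) * y - 1
          + α * (y ^ 2 + β * y) = 0 → y = ys) ∧
      0 < deriv (fun y => β * y ^ 3 - (2 * β + 1) * y ^ 2 + (β + 2) * y - 1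
          + α * (y ^ 2 + β * y)) ys := by
  have hβ0 : 0 < β := by linarith
  have hinv1 : β⁻¹ ≤ 1 := inv_le_one_of_one_le₀ hβ
  obtain ⟨ys, ⟨hys0, hysβ⟩, hys⟩ : ∃ ys ∈ Set.Ioo 0 β⁻¹, cubicH α β ys = 0 :=
    intermediate_value_Ioo (inv_pos.2 hβ0).le (cubicH.continuous α β).continuousOn
      ⟨by rw [cubicH.apply_zero]; norm_num, cubicH.apply_inv_pos hα hβ0⟩
  have hβys : β * ys < 1 := (lt_inv_iff_mul_lt_one_of_pos hβ0).1 hysβ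
  refine ⟨ys, ⟨hys0, hysβ.trans_le hinv1⟩, hys, fun y ⟨hy0, _⟩ hy => ?_,
    cubicH.deriv_pos hα hβ hys0.le hβys⟩
  have hβy : β * y < 1 := lt_of_not_ge fun h => (cubicH.pos_of_one_le_mul hα hβ0 hy0 h).ne' hy
  have hyβ : y < β⁻¹ := (lt_inv_iff_mul_lt_one_of_pos hβ0).2 hβy
  exact (cubicH.strictMonoOn_Icc_zero_inv hα hβ).injOn ⟨hy0.le, hyβ.le⟩ ⟨hys0.le, hysβ.le⟩
    (hy.trans hys.symm)

/-- For β ≥ 1 and 0 < α < 1/3, the cubic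
h_α(y) = βy³ − (2β+1)y² + (β+2)y − 1 + α(y² + βy) has exactly one zero y_* in
(0,1), and h_α'(y_*) > 0. -/
theorem cubic_unique_zero (α β : ℝ) (hα : 0 < α) (hα' : α < 1 / 3) (hβ : 1 ≤ β) :
    ∃ ys : ℝ, ys ∈ Set.Ioo (0 : ℝ) 1 ∧
      (β * ys ^ 3 - (2 * β + 1) * ys ^ 2 + (β + 2) * ys - 1
        + α * (ys ^ 2 + β * ys) = 0) ∧
      (∀ y ∈ Set.Ioo (0 : ℝ) 1,
        β * y ^ 3 - (2 * β + 1) * y ^ 2 + (β + 2) * y - 1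
          + α * (y ^ 2 + β * y) = 0 → y = ys) ∧
      0 < deriv (fun y => β * y ^ 3 - (2 * β + 1) * y ^ 2 + (β + 2) * y - 1
          + α * (y ^ 2 + β * y)) ys :=
  cubic_unique_zero_general α β hα hβ
end

section
/- Let α > 0 and β > 0, and let (R₁, z₁, R₂, z₂) : I → ℝ⁴ be a differentiable solution on an interval I, with R₁(t) > 0, R₂(t) > 0 and (R₁(t)−R₂(t))² + (z₁(t)−z₂(t))² > 0, of the system: dR₁/dt = −α R₂ (z₁−z₂)/P^{3/2}, dz₁/dt = β/R₁ + α R₂ (R₁−R₂)/P^{3/2}, dR₂/dt = α β R₁ (z₁−z₂)/P^{3/2}, dz₂/dt = 1/R₂ − α β R₁ (R₁−R₂)/P^{3/2}, where P = (R₁−R₂)² + (z₁−z₂)². Then the quantity β R₁(t)² + R₂(t)² is constant on I. -/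
noncomputable section

/-- For a solution of the coaxial-circles ODE system (3.3) with vorticity
strengths of the same sign, the quantity βR₁² + R₂² is conserved. -/
theorem conserved_quantity_same_sign
    (α β : ℝ) (hα : 0 < α) (hβ : 0 < β)
    (I : Set ℝ) (hI : I.OrdConnected)
    (R₁ z₁ R₂ z₂ : ℝ → ℝ)
    (hpos : ∀ t ∈ I, 0 < R₁ t ∧ 0 < R₂ t ∧
      0 < (R₁ t - R₂ t) ^ 2 + (z₁ t - z₂ t) ^ 2)
    (hR₁ : ∀ t ∈ I, HasDerivWithinAt R₁
      (-(α * R₂ t * (z₁ t - z₂ t)) /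
        ((R₁ t - R₂ t) ^ 2 + (z₁ t - z₂ t) ^ 2) ^ ((3 : ℝ) / 2)) I t)
    (hz₁ : ∀ t ∈ I, HasDerivWithinAt z₁
      (β / R₁ t + α * R₂ t * (R₁ t - R₂ t) /
        ((R₁ t - R₂ t) ^ 2 + (z₁ t - z₂ t) ^ 2) ^ ((3 : ℝ) / 2)) I t)
    (hR₂ : ∀ t ∈ I, HasDerivWithinAt R₂
      (α * β * R₁ t * (z₁ t - z₂ t) /
        ((R₁ t - R₂ t) ^ 2 + (z₁ t - z₂ t) ^ 2) ^ ((3 : ℝ) / 2)) I t)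
    (hz₂ : ∀ t ∈ I, HasDerivWithinAt z₂
      (1 / R₂ t - α * β * R₁ t * (R₁ t - R₂ t) /
        ((R₁ t - R₂ t) ^ 2 + (z₁ t - z₂ t) ^ 2) ^ ((3 : ℝ) / 2)) I t) :
    ∀ s ∈ I, ∀ t ∈ I,
      β * R₁ s ^ 2 + R₂ s ^ 2 = β * R₁ t ^ 2 + R₂ t ^ 2 := by
  have hconv : Convex ℝ I := hI.convex
  have key : ∀ t ∈ I, HasDerivWithinAt (fun t => β * R₁ t ^ 2 + R₂ t ^ 2) 0 I t := by
    intro t ht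
    have hP : (0:ℝ) < (R₁ t - R₂ t) ^ 2 + (z₁ t - z₂ t) ^ 2 := (hpos t ht).2.2
    have hP32 : ((R₁ t - R₂ t) ^ 2 + (z₁ t - z₂ t) ^ 2) ^ ((3:ℝ)/2) ≠ 0 :=
      ne_of_gt (Real.rpow_pos_of_pos hP _)
    have h1 := ((hR₁ t ht).const_mul β).const_mul 2
    have h2 := (hR₂ t ht).const_mul 2
    have hd : HasDerivWithinAt (fun t => β * R₁ t ^ 2 + R₂ t ^ 2)
        (2 * (β * (-(α * R₂ t * (z₁ t - z₂ t)) /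
            ((R₁ t - R₂ t) ^ 2 + (z₁ t - z₂ t) ^ 2) ^ ((3 : ℝ) / 2))) * R₁ t +
         2 * (α * β * R₁ t * (z₁ t - z₂ t) /
            ((R₁ t - R₂ t) ^ 2 + (z₁ t - z₂ t) ^ 2) ^ ((3 : ℝ) / 2)) * R₂ t) I t := by
      have := (((hR₁ t ht).const_mul β).mul (hR₁ t ht))
      have e1 : HasDerivWithinAt (fun t => β * R₁ t ^ 2)
          (2 * (β * (-(α * R₂ t * (z₁ t - z₂ t)) /
            ((R₁ t - R₂ t) ^ 2 + (z₁ t - z₂ t) ^ 2) ^ ((3 : ℝ) / 2))) * R₁ t) I t := by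
        have := ((hR₁ t ht).fun_pow 2).const_mul β
        refine this.congr_deriv ?_
        rw [show (2:ℕ) - 1 = 1 from rfl]; push_cast; ring
      have e2 : HasDerivWithinAt (fun t => R₂ t ^ 2)
          (2 * (α * β * R₁ t * (z₁ t - z₂ t) /
            ((R₁ t - R₂ t) ^ 2 + (z₁ t - z₂ t) ^ 2) ^ ((3 : ℝ) / 2)) * R₂ t) I t := by
        have := (hR₂ t ht).fun_pow 2
        refine this.congr_deriv ?_
        rw [show (2:ℕ) - 1 = 1 from rfl]; push_cast; ring
      exact e1.add e2
    convert hd using 1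
    field_simp
    ring
  intro s hs t ht
  have := hconv.norm_image_sub_le_of_norm_hasDerivWithin_le (C := 0)
    (fun x hx => key x hx) (fun x _ => by simp) ht hs
  have h0 : β * R₁ s ^ 2 + R₂ s ^ 2 - (β * R₁ t ^ 2 + R₂ t ^ 2) = 0 := by
    have h := this
    rw [zero_mul] at h
    exact norm_le_zero_iff.mp h
  linarith
end
end

section
/- Let α > 0 and β > 0, and let (R₁, z₁, R₂, z₂) : I → ℝ⁴ be a differentiable solution on an interval I, with R₁(t) > 0, R₂(t) > 0 and (R₁(t)−R₂(t))² + (z₁(t)−z₂(t))² > 0, of the system: dR₁/dt = −α R₂ (z₁−z₂)/P^{3/2}, dz₁/dt = β/R₁ + α R₂ (R₁−R₂)/P^{3/2}, dR₂/dt = α β R₁ (z₁−z₂)/P^{3/2}, dz₂/dt = 1/R₂ − α β R₁ (R₁−R₂)/P^{3/2}, where P = (R₁−R₂)² + (z₁−z₂)². Define X(ξ,t) = (R₁(t) cos ξ, R₁(t) sin ξ, z₁(t)) and Y(ξ,t) = (R₂(t) cos ξ, R₂(t) sin ξ, z₂(t)) in ℝ³. Then X and Y satisfy the partial differential equations X_t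 = β (X_ξ × X_ξξ)/|X_ξ|³ − α (Y_ξ × (X − Y))/|X − Y|³ and Y_t = (Y_ξ × Y_ξξ)/|Y_ξ|³ − α β (X_ξ × (Y − X))/|X − Y|³ for all ξ ∈ ℝ and t ∈ I, where × denotes the cross product in ℝ³. -/
noncomputable section

/-- The coaxial circle of radius R(t) at height z(t), parametrized by ξ. -/
def circFil (R z : ℝ → ℝ) (ξ t : ℝ) : Fin 3 → ℝ :=
  ![R t * Real.cos ξ, R t * Real.sin ξ, z t]

/-- The Euclidean magnitude of a vector in ℝ³. -/
def mag3 (v : Fin 3 → ℝ) : ℝ := Real.sqrt (v 0 ^ 2 + v 1 ^ 2 + v 2 ^ 2)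

/-- Partial derivative in the spatial parameter ξ. -/
def pderivXi (f : ℝ → ℝ → Fin 3 → ℝ) (ξ t : ℝ) : Fin 3 → ℝ :=
  deriv (fun s => f s t) ξ

lemma hasDerivAt_circ_xi (R z : ℝ → ℝ) (ξ t : ℝ) :
    HasDerivAt (fun s => circFil R z s t)
      ![-(R t * Real.sin ξ), R t * Real.cos ξ, 0] ξ := by
  rw [hasDerivAt_pi]
  intro i
  fin_cases i <;> simp only [circFil, Matrix.cons_val_zero, Matrix.cons_val_one,
    Matrix.head_cons, Matrix.cons_val_two, Matrix.tail_cons, Fin.isValue]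
  · simpa [mul_comm] using ((Real.hasDerivAt_cos ξ).const_mul (R t))
  · simpa [mul_comm] using ((Real.hasDerivAt_sin ξ).const_mul (R t))
  · exact hasDerivAt_const ξ (z t)

lemma pderivXi_circ (R z : ℝ → ℝ) (ξ t : ℝ) :
    pderivXi (circFil R z) ξ t = ![-(R t * Real.sin ξ), R t * Real.cos ξ, 0] :=
  (hasDerivAt_circ_xi R z ξ t).deriv

lemma pderivXi2_circ (R z : ℝ → ℝ) (ξ t : ℝ) :
    pderivXi (pderivXi (circFil R z)) ξ t
      = ![-(R t * Real.cos ξ), -(R t * Real.sin ξ), 0] := by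
  have h : (fun s => pderivXi (circFil R z) s t)
      = fun s => ![-(R t * Real.sin s), R t * Real.cos s, 0] := by
    funext s; exact pderivXi_circ R z s t
  rw [show pderivXi (pderivXi (circFil R z)) ξ t
    = deriv (fun s => pderivXi (circFil R z) s t) ξ from rfl, h]
  have : HasDerivAt (fun s => (![-(R t * Real.sin s), R t * Real.cos s, 0] : Fin 3 → ℝ))
      ![-(R t * Real.cos ξ), -(R t * Real.sin ξ), 0] ξ := by
    rw [hasDerivAt_pi]
    intro i
    fin_cases i <;> simp only [Matrix.cons_val_zero, Matrix.cons_val_one,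
      Matrix.head_cons, Matrix.cons_val_two, Matrix.tail_cons, Fin.isValue]
    · simpa [mul_comm] using (((Real.hasDerivAt_sin ξ).const_mul (R t)).fun_neg)
    · simpa [mul_comm] using ((Real.hasDerivAt_cos ξ).const_mul (R t))
    · exact hasDerivAt_const ξ 0
  exact this.deriv

lemma mag3_xi (R z : ℝ → ℝ) (ξ t : ℝ) (h : 0 < R t) :
    mag3 (pderivXi (circFil R z) ξ t) = R t := by
  rw [pderivXi_circ]
  have : (-(R t * Real.sin ξ)) ^ 2 + (R t * Real.cos ξ) ^ 2 + (0:ℝ) ^ 2 = R t ^ 2 := by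
    have := Real.sin_sq_add_cos_sq ξ
    ring_nf
    nlinarith [Real.sin_sq_add_cos_sq ξ]
  simp only [mag3, Matrix.cons_val_zero, Matrix.cons_val_one, Matrix.head_cons,
    Matrix.cons_val_two, Matrix.tail_cons]
  rw [this, Real.sqrt_sq h.le]

lemma mag3_diff (R₁ z₁ R₂ z₂ : ℝ → ℝ) (ξ t : ℝ) :
    mag3 (circFil R₁ z₁ ξ t - circFil R₂ z₂ ξ t)
      = Real.sqrt ((R₁ t - R₂ t) ^ 2 + (z₁ t - z₂ t) ^ 2) := by
  simp only [mag3, circFil, Pi.sub_apply, Matrix.cons_val_zero, Matrix.cons_val_one,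
    Matrix.head_cons, Matrix.cons_val_two, Matrix.tail_cons]
  congr 1
  nlinarith [Real.sin_sq_add_cos_sq ξ]

lemma sqrt_cube (P : ℝ) (hP : 0 ≤ P) : Real.sqrt P ^ 3 = P ^ ((3:ℝ)/2) := by
  rw [← Real.rpow_natCast (Real.sqrt P) 3, Real.sqrt_eq_rpow, ← Real.rpow_mul hP]
  norm_num

/-- If (R₁, z₁, R₂, z₂) solves the reduced ODE system (3.3), then the coaxial
circular filaments X(ξ,t) = (R₁ cos ξ, R₁ sin ξ, z₁) and
Y(ξ,t) = (R₂ cos ξ, R₂ sin ξ, z₂) solve the PDE system (3.1):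
X_t = β (X_ξ × X_ξξ)/|X_ξ|³ − α (Y_ξ × (X − Y))/|X − Y|³ and
Y_t = (Y_ξ × Y_ξξ)/|Y_ξ|³ − αβ (X_ξ × (Y − X))/|X − Y|³. -/
theorem circular_solution_of_PDE
    (α β : ℝ) (hα : 0 < α) (hβ : 0 < β)
    (I : Set ℝ) (R₁ z₁ R₂ z₂ : ℝ → ℝ)
    (hpos : ∀ t ∈ I, 0 < R₁ t ∧ 0 < R₂ t ∧
      0 < (R₁ t - R₂ t) ^ 2 + (z₁ t - z₂ t) ^ 2)
    (hR₁ : ∀ t ∈ I, HasDerivWithinAt R₁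
      (-(α * R₂ t * (z₁ t - z₂ t)) /
        ((R₁ t - R₂ t) ^ 2 + (z₁ t - z₂ t) ^ 2) ^ ((3 : ℝ) / 2)) I t)
    (hz₁ : ∀ t ∈ I, HasDerivWithinAt z₁
      (β / R₁ t + α * R₂ t * (R₁ t - R₂ t) /
        ((R₁ t - R₂ t) ^ 2 + (z₁ t - z₂ t) ^ 2) ^ ((3 : ℝ) / 2)) I t)
    (hR₂ : ∀ t ∈ I, HasDerivWithinAt R₂
      (α * β * R₁ t * (z₁ t - z₂ t) /
        ((R₁ t - R₂ t) ^ 2 + (z₁ t - z₂ t) ^ 2) ^ ((3 : ℝ) / 2)) I t)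
    (hz₂ : ∀ t ∈ I, HasDerivWithinAt z₂
      (1 / R₂ t - α * β * R₁ t * (R₁ t - R₂ t) /
        ((R₁ t - R₂ t) ^ 2 + (z₁ t - z₂ t) ^ 2) ^ ((3 : ℝ) / 2)) I t) :
    (∀ ξ : ℝ, ∀ t ∈ I,
      HasDerivWithinAt (fun τ => circFil R₁ z₁ ξ τ)
        ((β / mag3 (pderivXi (circFil R₁ z₁) ξ t) ^ 3) •
            crossProduct (pderivXi (circFil R₁ z₁) ξ t)
              (pderivXi (pderivXi (circFil R₁ z₁)) ξ t) -
          (α / mag3 (circFil R₁ z₁ ξ t - circFil R₂ z₂ ξ t) ^ 3) •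
            crossProduct (pderivXi (circFil R₂ z₂) ξ t)
              (circFil R₁ z₁ ξ t - circFil R₂ z₂ ξ t)) I t) ∧
    (∀ ξ : ℝ, ∀ t ∈ I,
      HasDerivWithinAt (fun τ => circFil R₂ z₂ ξ τ)
        ((1 / mag3 (pderivXi (circFil R₂ z₂) ξ t) ^ 3) •
            crossProduct (pderivXi (circFil R₂ z₂) ξ t)
              (pderivXi (pderivXi (circFil R₂ z₂)) ξ t) -
          (α * β / mag3 (circFil R₁ z₁ ξ t - circFil R₂ z₂ ξ t) ^ 3) •
            crossProduct (pderivXi (circFil R₁ z₁) ξ t)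
              (circFil R₂ z₂ ξ t - circFil R₁ z₁ ξ t)) I t) := by
  have key : ∀ t ∈ I, ∀ ξ : ℝ, True := fun _ _ _ => trivial
  constructor
  · intro ξ t ht
    obtain ⟨h1, h2, hP⟩ := hpos t ht
    set P := (R₁ t - R₂ t) ^ 2 + (z₁ t - z₂ t) ^ 2 with hPdef
    have hm : mag3 (circFil R₁ z₁ ξ t - circFil R₂ z₂ ξ t) ^ 3 = P ^ ((3:ℝ)/2) := by
      rw [mag3_diff, sqrt_cube _ hP.le]
    have hP32 : (0:ℝ) < P ^ ((3:ℝ)/2) := Real.rpow_pos_of_pos hP _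
    rw [hasDerivWithinAt_pi]
    intro i
    fin_cases i
    · have := (hR₁ t ht).mul_const (Real.cos ξ)
      convert this using 1
      any_goals rfl
      rw [Pi.sub_apply, Pi.smul_apply, Pi.smul_apply, hm, mag3_xi R₁ z₁ ξ t h1]
      simp only [Fin.zero_eta, Fin.mk_one, cross_apply, pderivXi_circ,
          pderivXi2_circ, circFil, Pi.sub_apply,
          Matrix.cons_val_zero, Matrix.cons_val_one, Matrix.head_cons,
          Matrix.cons_val_two, Matrix.tail_cons, smul_eq_mul]
      rw [← hPdef]
      field_simp [hP32.ne']
      ring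
    · have := (hR₁ t ht).mul_const (Real.sin ξ)
      convert this using 1
      any_goals rfl
      rw [Pi.sub_apply, Pi.smul_apply, Pi.smul_apply, hm, mag3_xi R₁ z₁ ξ t h1]
      simp only [Fin.zero_eta, Fin.mk_one, cross_apply, pderivXi_circ,
          pderivXi2_circ, circFil, Pi.sub_apply,
          Matrix.cons_val_zero, Matrix.cons_val_one, Matrix.head_cons,
          Matrix.cons_val_two, Matrix.tail_cons, smul_eq_mul]
      rw [← hPdef]
      field_simp [hP32.ne']
      ring
    · have := hz₁ t ht
      convert this using 1
      any_goals rfl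
      rw [Pi.sub_apply, Pi.smul_apply, Pi.smul_apply, hm, mag3_xi R₁ z₁ ξ t h1]
      simp [Fin.zero_eta, Fin.mk_one, cross_apply, pderivXi_circ,
          pderivXi2_circ, circFil, Pi.sub_apply,
          Matrix.cons_val_zero, Matrix.cons_val_one, Matrix.head_cons,
          Matrix.cons_val_two, Matrix.tail_cons, smul_eq_mul]
      have hsc := Real.sin_sq_add_cos_sq ξ
      have e1 : R₁ t * Real.sin ξ * (R₁ t * Real.sin ξ) + R₁ t * Real.cos ξ * (R₁ t * Real.cos ξ)
          = R₁ t ^ 2 := by linear_combination (R₁ t ^ 2) * hsc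
      have e2 : -(R₂ t * Real.sin ξ * (R₁ t * Real.sin ξ - R₂ t * Real.sin ξ)) -
            R₂ t * Real.cos ξ * (R₁ t * Real.cos ξ - R₂ t * Real.cos ξ)
          = -(R₂ t * (R₁ t - R₂ t)) := by linear_combination (-(R₂ t * (R₁ t - R₂ t))) * hsc
      rw [e1, e2, ← hPdef]
      field_simp [hP32.ne', h1.ne']
      ring
  · intro ξ t ht
    obtain ⟨h1, h2, hP⟩ := hpos t ht
    set P := (R₁ t - R₂ t) ^ 2 + (z₁ t - z₂ t) ^ 2 with hPdef
    have hm : mag3 (circFil R₁ z₁ ξ t - circFil R₂ z₂ ξ t) ^ 3 = P ^ ((3:ℝ)/2) := by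
      rw [mag3_diff, sqrt_cube _ hP.le]
    have hP32 : (0:ℝ) < P ^ ((3:ℝ)/2) := Real.rpow_pos_of_pos hP _
    rw [hasDerivWithinAt_pi]
    intro i
    fin_cases i
    · have := (hR₂ t ht).mul_const (Real.cos ξ)
      convert this using 1
      any_goals rfl
      rw [Pi.sub_apply, Pi.smul_apply, Pi.smul_apply, hm, mag3_xi R₂ z₂ ξ t h2]
      simp only [Fin.zero_eta, Fin.mk_one, cross_apply, pderivXi_circ,
          pderivXi2_circ, circFil, Pi.sub_apply,
          Matrix.cons_val_zero, Matrix.cons_val_one, Matrix.head_cons,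
          Matrix.cons_val_two, Matrix.tail_cons, smul_eq_mul]
      rw [← hPdef]
      field_simp [hP32.ne']
      ring
    · have := (hR₂ t ht).mul_const (Real.sin ξ)
      convert this using 1
      any_goals rfl
      rw [Pi.sub_apply, Pi.smul_apply, Pi.smul_apply, hm, mag3_xi R₂ z₂ ξ t h2]
      simp only [Fin.zero_eta, Fin.mk_one, cross_apply, pderivXi_circ,
          pderivXi2_circ, circFil, Pi.sub_apply,
          Matrix.cons_val_zero, Matrix.cons_val_one, Matrix.head_cons,
          Matrix.cons_val_two, Matrix.tail_cons, smul_eq_mul]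
      rw [← hPdef]
      field_simp [hP32.ne']
      ring
    · have := hz₂ t ht
      convert this using 1
      any_goals rfl
      rw [Pi.sub_apply, Pi.smul_apply, Pi.smul_apply, hm, mag3_xi R₂ z₂ ξ t h2]
      simp [Fin.zero_eta, Fin.mk_one, cross_apply, pderivXi_circ,
          pderivXi2_circ, circFil, Pi.sub_apply,
          Matrix.cons_val_zero, Matrix.cons_val_one, Matrix.head_cons,
          Matrix.cons_val_two, Matrix.tail_cons, smul_eq_mul]
      have hsc := Real.sin_sq_add_cos_sq ξ
      have e1 : R₂ t * Real.sin ξ * (R₂ t * Real.sin ξ) + R₂ t * Real.cos ξ * (R₂ t * Real.cos ξ)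
          = R₂ t ^ 2 := by linear_combination (R₂ t ^ 2) * hsc
      have e2 : -(R₁ t * Real.sin ξ * (R₂ t * Real.sin ξ - R₁ t * Real.sin ξ)) -
            R₁ t * Real.cos ξ * (R₂ t * Real.cos ξ - R₁ t * Real.cos ξ)
          = R₁ t * (R₁ t - R₂ t) := by linear_combination (R₁ t * (R₁ t - R₂ t)) * hsc
      rw [e1, e2, ← hPdef]
      field_simp [hP32.ne', h2.ne']
end
end

section
/- Let α > 0, Γ₁, Γ₂ ∈ ℝ, and let z₁, z₂ : I → ℂ be differentiable functions on an interval I with z₁(t) ≠ z₂(t) for all t, satisfying dz₁/dt = −i α Γ₂ (z₁ − z₂)/|z₁ − z₂|^{3/2} and dz₂/dt = −i α Γ₁ (z₂ − z₁)/|z₁ − z₂|^{3/2}. Then |z₁(t) − z₂(t)| is constant on I, and if Γ₁ + Γ₂ ≠ 0 then the center of vorticity C(t) = (Γ₁ z₁(t) + Γ₂ z₂(t))/(Γ₁ + Γ₂) is also constant on I. -/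
noncomputable section

private lemma const_of_derivWithin_zero {E : Type*} [NormedAddCommGroup E]
    [NormedSpace ℝ E] {I : Set ℝ} (hconv : Convex ℝ I) {f : ℝ → E}
    (hf : ∀ t ∈ I, HasDerivWithinAt f 0 I t) :
    ∀ s ∈ I, ∀ t ∈ I, f s = f t := by
  intro s hs t ht
  have h := hconv.norm_image_sub_le_of_norm_hasDerivWithin_le
    (f' := fun _ => 0) (C := 0) hf (fun x hx => by simp) ht hs
  rw [zero_mul] at h
  exact sub_eq_zero.mp (norm_le_zero_iff.mp h)

/-- For two point vortices z₁, z₂ in the plane obeying the mutual-induction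
system, the distance |z₁ − z₂| is conserved, and if Γ₁ + Γ₂ ≠ 0 the center of
vorticity C = (Γ₁z₁ + Γ₂z₂)/(Γ₁ + Γ₂) is conserved. -/
theorem point_vortex_conserved
    (α Γ₁ Γ₂ : ℝ) (hα : 0 < α)
    (I : Set ℝ) (hI : I.OrdConnected)
    (z₁ z₂ : ℝ → ℂ)
    (hne : ∀ t ∈ I, z₁ t ≠ z₂ t)
    (h₁ : ∀ t ∈ I, HasDerivWithinAt z₁
      (-Complex.I * (α : ℂ) * (Γ₂ : ℂ) * (z₁ t - z₂ t) /
        ((‖z₁ t - z₂ t‖ ^ ((3 : ℝ) / 2) : ℝ) : ℂ)) I t)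
    (h₂ : ∀ t ∈ I, HasDerivWithinAt z₂
      (-Complex.I * (α : ℂ) * (Γ₁ : ℂ) * (z₂ t - z₁ t) /
        ((‖z₁ t - z₂ t‖ ^ ((3 : ℝ) / 2) : ℝ) : ℂ)) I t) :
    (∀ s ∈ I, ∀ t ∈ I,
      ‖z₁ s - z₂ s‖ = ‖z₁ t - z₂ t‖) ∧
    (Γ₁ + Γ₂ ≠ 0 → ∀ s ∈ I, ∀ t ∈ I,
      ((Γ₁ : ℂ) * z₁ s + (Γ₂ : ℂ) * z₂ s) / ((Γ₁ : ℂ) + (Γ₂ : ℂ)) =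
        ((Γ₁ : ℂ) * z₁ t + (Γ₂ : ℂ) * z₂ t) / ((Γ₁ : ℂ) + (Γ₂ : ℂ))) := by
  have hconv : Convex ℝ I := convex_iff_ordConnected.mpr hI
  -- the coefficient
  set k : ℝ → ℝ := fun t =>
    -(α * (Γ₁ + Γ₂) / (‖z₁ t - z₂ t‖ ^ ((3 : ℝ) / 2))) with hk
  -- derivative of the relative vector
  have hw : ∀ t ∈ I, HasDerivWithinAt (fun t => z₁ t - z₂ t)
      ((k t) • (Complex.I * (z₁ t - z₂ t))) I t := by
    intro t ht
    have h := (h₁ t ht).sub (h₂ t ht)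
    convert h using 1
    rfl
    rfl
    rw [hk, Complex.real_smul]
    push_cast
    ring
  constructor
  · -- distance conservation via |w|²
    have hg : ∀ t ∈ I, HasDerivWithinAt
        (fun t => (z₁ t - z₂ t).re ^ 2 + (z₁ t - z₂ t).im ^ 2) 0 I t := by
      intro t ht
      have hre : HasDerivWithinAt (fun t => (z₁ t - z₂ t).re)
          (((k t) • (Complex.I * (z₁ t - z₂ t))).re) I t :=
        HasFDerivAt.comp_hasDerivWithinAt t Complex.reCLM.hasFDerivAt (hw t ht)
      have him : HasDerivWithinAt (fun t => (z₁ t - z₂ t).im)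
          (((k t) • (Complex.I * (z₁ t - z₂ t))).im) I t :=
        HasFDerivAt.comp_hasDerivWithinAt t Complex.imCLM.hasFDerivAt (hw t ht)
      have h := (hre.pow 2).add (him.pow 2)
      convert h using 1
      rfl
      rfl
      rfl
      simp [Complex.smul_re, Complex.smul_im, Complex.mul_re, Complex.mul_im]
      ring
    have hc := const_of_derivWithin_zero hconv hg
    intro s hs t ht
    have h := hc s hs t ht
    rw [Complex.norm_def, Complex.norm_def]
    congr 1
    simpa [Complex.normSq_apply, pow_two] using h
  · -- center of vorticity
    intro _ s hs t ht
    have hF : ∀ t ∈ I, HasDerivWithinAt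
        (fun t => (Γ₁ : ℂ) * z₁ t + (Γ₂ : ℂ) * z₂ t) 0 I t := by
      intro t ht
      have h := ((h₁ t ht).const_mul (Γ₁ : ℂ)).add ((h₂ t ht).const_mul (Γ₂ : ℂ))
      convert h using 1
      rfl
      rfl
      ring
    rw [const_of_derivWithin_zero hconv hF s hs t ht]
end
end

section
/- Let α > 0 and Γ₁, Γ₂ ∈ ℝ with Γ₁ + Γ₂ ≠ 0, let a₁, a₂ ∈ ℂ with a₁ ≠ a₂, set C = (Γ₁ a₁ + Γ₂ a₂)/(Γ₁ + Γ₂), D = |a₁ − a₂|, and ω = −α(Γ₁ + Γ₂)/D^{3/2}. Then the functions z_j(t) = (a_j − C) e^{iωt} + C for j = 1, 2 satisfy z_j(0) = a_j, z₁(t) ≠ z₂(t) for all t, and solve the system dz₁/dt = −i α Γ₂ (z₁ − z₂)/|z₁ − z₂|^{3/2}, dz₂/dt = −i α Γ₁ (z₂ − z₁)/|z₁ − z₂|^{3/2} for all t ∈ ℝ. -/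
/-!
Both vortices rotate rigidly with angular velocity `ω` about the center of vorticity `C`, which
lies on the line through them: `z₁ - C = Γ₂ / (Γ₁ + Γ₂) * (z₁ - z₂)` and symmetrically for `z₂`.
A rigid rotation keeps `|z₁ - z₂| = D` constant, and its velocity `i ω (z_j - C)` is then exactly
the right-hand side of the system for the given value of `ω`.
-/

open Complex

namespace PointVortex

noncomputable def rotation (c : ℂ) (ω : ℝ) (a : ℂ) (t : ℝ) : ℂ :=
  (a - c) * exp (I * ω * t) + c

section Rotation

variable {c a b : ℂ} {ω t : ℝ}

lemma rotation_zero : rotation c ω a 0 = a := by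
  simp [rotation]

lemma rotation_sub_center : rotation c ω a t - c = (a - c) * exp (I * ω * t) := by
  simp [rotation]

lemma rotation_sub_rotation :
    rotation c ω a t - rotation c ω b t = (a - b) * exp (I * ω * t) := by
  simp only [rotation]; ring

lemma norm_rotation_sub_rotation : ‖rotation c ω a t - rotation c ω b t‖ = ‖a - b‖ := by
  rw [rotation_sub_rotation, norm_mul, mul_assoc, ← ofReal_mul, norm_exp_I_mul_ofReal, mul_one]

lemma rotation_ne_rotation (hab : a ≠ b) : rotation c ω a t ≠ rotation c ω b t := by
  rw [← sub_ne_zero, rotation_sub_rotation]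
  exact mul_ne_zero (sub_ne_zero.mpr hab) (exp_ne_zero _)

lemma hasDerivAt_rotation :
    HasDerivAt (rotation c ω a) (I * ω * (rotation c ω a t - c)) t := by
  have hlin : HasDerivAt (fun s : ℝ => I * ω * (s : ℂ)) (I * ω) t := by
    simpa using (ofRealCLM.hasDerivAt (x := t)).const_mul (I * ω)
  refine ((hlin.cexp.const_mul (a - c)).add_const c).congr_deriv ?_
  rw [rotation_sub_center]; ring

end Rotation

lemma sub_weighted_mean {K : Type*} [Field K] {w₁ w₂ : K} (hw : w₁ + w₂ ≠ 0) (a₁ a₂ : K) :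
    a₁ - (w₁ * a₁ + w₂ * a₂) / (w₁ + w₂) = w₂ / (w₁ + w₂) * (a₁ - a₂) := by
  field_simp; ring

lemma hasDerivAt_rotation_about_center {Γ₁ Γ₂ : ℝ} (hsum : Γ₁ + Γ₂ ≠ 0) (α : ℝ) (a₁ a₂ : ℂ)
    (t : ℝ) :
    let C := ((Γ₁ : ℂ) * a₁ + (Γ₂ : ℂ) * a₂) / ((Γ₁ : ℂ) + (Γ₂ : ℂ))
    let ω := -(α * (Γ₁ + Γ₂)) / ‖a₁ - a₂‖ ^ ((3 : ℝ) / 2)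
    HasDerivAt (rotation C ω a₁)
      (-I * α * Γ₂ * (rotation C ω a₁ t - rotation C ω a₂ t) /
        ((‖rotation C ω a₁ t - rotation C ω a₂ t‖ ^ ((3 : ℝ) / 2) : ℝ) : ℂ)) t := by
  intro C ω
  have hsumC : (Γ₁ : ℂ) + Γ₂ ≠ 0 := by exact_mod_cast hsum
  refine hasDerivAt_rotation.congr_deriv ?_
  rw [norm_rotation_sub_rotation, rotation_sub_rotation, rotation_sub_center,
    sub_weighted_mean hsumC]
  push_cast [ω]
  field_simp

end PointVortex

open PointVortex in
theorem point_vortex_rotating_solution_general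
    (α Γ₁ Γ₂ : ℝ) (hsum : Γ₁ + Γ₂ ≠ 0)
    (a₁ a₂ : ℂ) (ha : a₁ ≠ a₂)
    (C : ℂ) (hC : C = ((Γ₁ : ℂ) * a₁ + (Γ₂ : ℂ) * a₂) / ((Γ₁ : ℂ) + (Γ₂ : ℂ)))
    (D : ℝ) (hD : D = ‖a₁ - a₂‖)
    (ω : ℝ) (hω : ω = -(α * (Γ₁ + Γ₂)) / D ^ ((3 : ℝ) / 2))
    (z₁ z₂ : ℝ → ℂ)
    (hz₁ : ∀ t : ℝ, z₁ t = (a₁ - C) * Complex.exp (Complex.I * (ω : ℂ) * (t : ℂ)) + C)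
    (hz₂ : ∀ t : ℝ, z₂ t = (a₂ - C) * Complex.exp (Complex.I * (ω : ℂ) * (t : ℂ)) + C) :
    z₁ 0 = a₁ ∧ z₂ 0 = a₂ ∧ (∀ t : ℝ, z₁ t ≠ z₂ t) ∧
    (∀ t : ℝ, HasDerivAt z₁
      (-Complex.I * (α : ℂ) * (Γ₂ : ℂ) * (z₁ t - z₂ t) /
        ((‖z₁ t - z₂ t‖ ^ ((3 : ℝ) / 2) : ℝ) : ℂ)) t) ∧
    (∀ t : ℝ, HasDerivAt z₂
      (-Complex.I * (α : ℂ) * (Γ₁ : ℂ) * (z₂ t - z₁ t) /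
        ((‖z₁ t - z₂ t‖ ^ ((3 : ℝ) / 2) : ℝ) : ℂ)) t) := by
  obtain rfl : z₁ = rotation C ω a₁ := funext hz₁
  obtain rfl : z₂ = rotation C ω a₂ := funext hz₂
  subst hC hD hω
  have hsum' : Γ₂ + Γ₁ ≠ 0 := by rwa [add_comm]
  refine ⟨rotation_zero, rotation_zero, fun t => rotation_ne_rotation ha,
    hasDerivAt_rotation_about_center hsum α a₁ a₂, fun t => ?_⟩
  -- the second vortex is the first one after relabelling, which fixes `C` and `ω`
  have h := hasDerivAt_rotation_about_center hsum' α a₂ a₁ t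
  simpa only [add_comm ((Γ₂ : ℂ) * a₂), add_comm (Γ₂ : ℂ), add_comm Γ₂, norm_sub_rev a₂ a₁,
    norm_sub_rev (rotation _ _ a₂ t)] using h

/-- When Γ₁ + Γ₂ ≠ 0, the explicit rotating configuration
z_j(t) = (a_j − C) e^{iωt} + C, with C the center of vorticity, D = |a₁ − a₂|
and ω = −α(Γ₁ + Γ₂)/D^{3/2}, solves the point-vortex system with
z_j(0) = a_j, and the two vortices never collide. -/
theorem point_vortex_rotating_solution
    (α Γ₁ Γ₂ : ℝ) (hα : 0 < α) (hsum : Γ₁ + Γ₂ ≠ 0)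
    (a₁ a₂ : ℂ) (ha : a₁ ≠ a₂)
    (C : ℂ) (hC : C = ((Γ₁ : ℂ) * a₁ + (Γ₂ : ℂ) * a₂) / ((Γ₁ : ℂ) + (Γ₂ : ℂ)))
    (D : ℝ) (hD : D = ‖a₁ - a₂‖)
    (ω : ℝ) (hω : ω = -(α * (Γ₁ + Γ₂)) / D ^ ((3 : ℝ) / 2))
    (z₁ z₂ : ℝ → ℂ)
    (hz₁ : ∀ t : ℝ, z₁ t = (a₁ - C) * Complex.exp (Complex.I * (ω : ℂ) * (t : ℂ)) + C)
    (hz₂ : ∀ t : ℝ, z₂ t = (a₂ - C) * Complex.exp (Complex.I * (ω : ℂ) * (t : ℂ)) + C) :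
    z₁ 0 = a₁ ∧ z₂ 0 = a₂ ∧ (∀ t : ℝ, z₁ t ≠ z₂ t) ∧
    (∀ t : ℝ, HasDerivAt z₁
      (-Complex.I * (α : ℂ) * (Γ₂ : ℂ) * (z₁ t - z₂ t) /
        ((‖z₁ t - z₂ t‖ ^ ((3 : ℝ) / 2) : ℝ) : ℂ)) t) ∧
    (∀ t : ℝ, HasDerivAt z₂
      (-Complex.I * (α : ℂ) * (Γ₁ : ℂ) * (z₂ t - z₁ t) /
        ((‖z₁ t - z₂ t‖ ^ ((3 : ℝ) / 2) : ℝ) : ℂ)) t) :=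
  point_vortex_rotating_solution_general α Γ₁ Γ₂ hsum a₁ a₂ ha C hC D hD ω hω z₁ z₂ hz₁ hz₂
end

section
/- Let α > 0 and γ ≥ 1, and let (R₁, z₁, R₂, z₂) : I → ℝ⁴ be a differentiable solution on an interval I, with R₁(t) > 0, R₂(t) > 0 and (R₁(t)−R₂(t))² + (z₁(t)−z₂(t))² > 0, of the system: dR₁/dt = −α R₂ (z₁−z₂)/P^{3/2}, dz₁/dt = −γ/R₁ + α R₂ (R₁−R₂)/P^{3/2}, dR₂/dt = −α γ R₁ (z₁−z₂)/P^{3/2}, dz₂/dt = 1/R₂ + α γ R₁ (R₁−R₂)/P^{3/2}, where P = (R₁−R₂)² + (z₁−z₂)². Then the quantity γ R₁(t)² − R₂(t)² is constant on I. -/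
noncomputable section

/-- For a solution of the coaxial-circles ODE system (4.1) with vorticity
strengths of opposite signs, the quantity γR₁² − R₂² is conserved. -/
theorem conserved_quantity_opposite_sign
    (α γ : ℝ) (hα : 0 < α) (hγ : 1 ≤ γ)
    (I : Set ℝ) (hI : I.OrdConnected)
    (R₁ z₁ R₂ z₂ : ℝ → ℝ)
    (hpos : ∀ t ∈ I, 0 < R₁ t ∧ 0 < R₂ t ∧
      0 < (R₁ t - R₂ t) ^ 2 + (z₁ t - z₂ t) ^ 2)
    (hR₁ : ∀ t ∈ I, HasDerivWithinAt R₁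
      (-(α * R₂ t * (z₁ t - z₂ t)) /
        ((R₁ t - R₂ t) ^ 2 + (z₁ t - z₂ t) ^ 2) ^ ((3 : ℝ) / 2)) I t)
    (hz₁ : ∀ t ∈ I, HasDerivWithinAt z₁
      (-(γ / R₁ t) + α * R₂ t * (R₁ t - R₂ t) /
        ((R₁ t - R₂ t) ^ 2 + (z₁ t - z₂ t) ^ 2) ^ ((3 : ℝ) / 2)) I t)
    (hR₂ : ∀ t ∈ I, HasDerivWithinAt R₂
      (-(α * γ * R₁ t * (z₁ t - z₂ t)) /
        ((R₁ t - R₂ t) ^ 2 + (z₁ t - z₂ t) ^ 2) ^ ((3 : ℝ) / 2)) I t)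
    (hz₂ : ∀ t ∈ I, HasDerivWithinAt z₂
      (1 / R₂ t + α * γ * R₁ t * (R₁ t - R₂ t) /
        ((R₁ t - R₂ t) ^ 2 + (z₁ t - z₂ t) ^ 2) ^ ((3 : ℝ) / 2)) I t) :
    ∀ s ∈ I, ∀ t ∈ I,
      γ * R₁ s ^ 2 - R₂ s ^ 2 = γ * R₁ t ^ 2 - R₂ t ^ 2 := by
  intro s hs t ht
  set f : ℝ → ℝ := fun u => γ * R₁ u ^ 2 - R₂ u ^ 2 with hf
  have hd : ∀ u ∈ I, HasDerivWithinAt f 0 I u := by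
    intro u hu
    have h1 := ((hR₁ u hu).pow 2).const_mul γ
    have h2 := (hR₂ u hu).pow 2
    have := h1.sub h2
    convert this using 1
    · rfl
    · rfl
    · ext y; simp [hf]
    · ring
  have hconv : Convex ℝ I := hI.convex
  have hle := hconv.norm_image_sub_le_of_norm_hasDerivWithin_le
    (C := 0) hd (fun x _ => by simp) ht hs
  rw [zero_mul] at hle
  have h0 : f s - f t = 0 := by
    have := norm_le_zero_iff.mp hle
    simpa using this
  have : f s = f t := by linarith [h0]
  simpa [hf] using this
end
end
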